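/- arXiv:1702.05947 — 3 statements merged into one kernel-verified Lean document; each statement's English description precedes it below -/
import Mathlib

section
/- The following system of linear inequalities over nonnegative reals z_1,...,z_7 is infeasible: z_1+z_2+z_3+z_4+z_5+z_6+z_7 ≥ 1; −52z_1+4z_2+12z_3+12z_4+4z_6 ≥ 0; 6z_1−54z_2+10z_3+10z_4+2z_6+2z_7 ≥ 0; 8z_1−8z_3−8z_4+8z_7 ≥ 0; −48z_5+16z_6+16z_7 ≥ 0; 5z_1+z_2+7z_3+7z_4+13z_5−41z_6+15z_7 ≥ 0; 12z_3+12z_4+12z_5+12z_6−36z_7 ≥ 0; z_i ≥ 0 for all i. -/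
theorem stmt8 : ¬ ∃ z : Fin 7 → ℝ, (∀ i, 0 ≤ z i) ∧
    1 ≤ z 0 + z 1 + z 2 + z 3 + z 4 + z 5 + z 6 ∧
    0 ≤ -52*z 0 + 4*z 1 + 12*z 2 + 12*z 3 + 4*z 5 ∧
    0 ≤ 6*z 0 - 54*z 1 + 10*z 2 + 10*z 3 + 2*z 5 + 2*z 6 ∧
    0 ≤ 8*z 0 - 8*z 2 - 8*z 3 + 8*z 6 ∧
    0 ≤ -48*z 4 + 16*z 5 + 16*z 6 ∧
    0 ≤ 5*z 0 + z 1 + 7*z 2 + 7*z 3 + 13*z 4 - 41*z 5 + 15*z 6 ∧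
    0 ≤ 12*z 2 + 12*z 3 + 12*z 4 + 12*z 5 - 36*z 6 := by
  rintro ⟨z, hz, h1, h2, h3, h4, h5, h6, h7⟩
  have := hz 0; have := hz 1; have := hz 2; have := hz 3
  have := hz 4; have := hz 5; have := hz 6
  linarith
end

section
/- Let A be a UC family with ∅ ∈ A and union [n], and suppose there is a nonnegative vector z with ∑_i z_i ≥ 1 such that for every j ∈ [n], setting B^j = P([n]\{j}) ⊎ A, the inequality ∑_{S ∈ B^j}(∑_{i∈S} z_i − ∑_{i∉S} z_i) ≥ 0 holds. Then for each j ∈ [n], setting G^j = B^j \ P([n]\{j}), the inequality ∑_{S ∈ G^j}(∑_{i∈S} z_i − ∑_{i∉S} z_i) ≥ 0 also holds. -/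
open Finset

def UnionClosed (F : Finset (Finset ℕ)) : Prop := ∀ A ∈ F, ∀ B ∈ F, A ∪ B ∈ F

def uplus (F G : Finset (Finset ℕ)) : Finset (Finset ℕ) :=
  (F ×ˢ G).image fun p => p.1 ∪ p.2

/-!
On `𝒫(U \ {j})` the weight `∑_{i ∈ S} z i - ∑_{i ∈ U \ S} z i` is the balanced weight of `S`
relative to `U \ {j}`, minus `z j`. The balanced weights cancel under `S ↦ (U \ {j}) \ S`, so
`𝒫(U \ {j})` contributes `-2^{|U| - 1} z j ≤ 0` to the sum over `B^j ⊇ 𝒫(U \ {j})`; removing it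
keeps the sum nonnegative.
-/

section Weights

variable {α M : Type*} [DecidableEq α] [AddCommGroup M]

theorem Finset.sum_powerset_sum_sub_sum_sdiff (z : α → M) (T : Finset α) :
    ∑ S ∈ T.powerset, (∑ i ∈ S, z i - ∑ i ∈ T \ S, z i) = 0 := by
  rw [sum_sub_distrib, sub_eq_zero]
  refine sum_nbij' (T \ ·) (T \ ·) ?_ ?_ ?_ ?_ ?_ <;> simp_all

theorem Finset.sum_sdiff_erase_of_subset {U S : Finset α} {j : α} (z : α → M) (hj : j ∈ U)
    (hS : S ⊆ U.erase j) :
    ∑ i ∈ U \ S, z i = ∑ i ∈ U.erase j \ S, z i + z j := by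
  have hjS : j ∉ S := fun h => by simpa using hS h
  rw [← insert_erase hj, insert_sdiff_of_notMem _ hjS, sum_insert (by simp), add_comm,
    erase_insert (notMem_erase j U)]

theorem Finset.sum_powerset_erase_sum_sub_sum_sdiff {U : Finset α} {j : α} (z : α → M)
    (hj : j ∈ U) :
    ∑ S ∈ (U.erase j).powerset, (∑ i ∈ S, z i - ∑ i ∈ U \ S, z i) =
      -((U.erase j).powerset.card • z j) := by
  have hshift : ∀ S ∈ (U.erase j).powerset,
      ∑ i ∈ S, z i - ∑ i ∈ U \ S, z i = (∑ i ∈ S, z i - ∑ i ∈ U.erase j \ S, z i) - z j :=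
    fun S hS => by rw [sum_sdiff_erase_of_subset z hj (mem_powerset.1 hS), sub_add_eq_sub_sub]
  rw [sum_congr rfl hshift, sum_sub_distrib, sum_powerset_sum_sub_sum_sdiff, sum_const, zero_sub]

end Weights

theorem powerset_subset_uplus {A : Finset (Finset ℕ)} (hempty : ∅ ∈ A) (T : Finset ℕ) :
    T.powerset ⊆ uplus T.powerset A := fun S hS =>
  mem_image.2 ⟨(S, ∅), mem_product.2 ⟨hS, hempty⟩, union_empty S⟩

theorem stmt10_general (n : ℕ) (A : Finset (Finset ℕ))
    (hempty : ∅ ∈ A)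
    (z : ℕ → ℝ) (hz : ∀ i, 0 ≤ z i)
    (h : ∀ j ∈ Finset.Icc 1 n,
      0 ≤ ∑ S ∈ (uplus (((Finset.Icc 1 n).erase j).powerset) A),
            ((∑ i ∈ S, z i) - ∑ i ∈ Finset.Icc 1 n \ S, z i)) :
    ∀ j ∈ Finset.Icc 1 n,
      0 ≤ ∑ S ∈ ((uplus (((Finset.Icc 1 n).erase j).powerset) A) \
                  ((Finset.Icc 1 n).erase j).powerset),
            ((∑ i ∈ S, z i) - ∑ i ∈ Finset.Icc 1 n \ S, z i) := by
  intro j hj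
  have hsplit := sum_sdiff (f := fun S => (∑ i ∈ S, z i) - ∑ i ∈ Finset.Icc 1 n \ S, z i)
    (powerset_subset_uplus hempty ((Finset.Icc 1 n).erase j))
  have hpowerset := sum_powerset_erase_sum_sub_sum_sdiff z hj
  have hzj : 0 ≤ ((Finset.Icc 1 n).erase j).powerset.card • z j := nsmul_nonneg (hz j) _
  linarith [h j hj]

theorem stmt10 (n : ℕ) (A : Finset (Finset ℕ)) (hUC : UnionClosed A)
    (hempty : ∅ ∈ A) (hA : ∀ S ∈ A, S ⊆ Finset.Icc 1 n) (hunion : A.sup id = Finset.Icc 1 n)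
    (z : ℕ → ℝ) (hz : ∀ i, 0 ≤ z i) (hsum : 1 ≤ ∑ i ∈ Finset.Icc 1 n, z i)
    (h : ∀ j ∈ Finset.Icc 1 n,
      0 ≤ ∑ S ∈ (uplus (((Finset.Icc 1 n).erase j).powerset) A),
            ((∑ i ∈ S, z i) - ∑ i ∈ Finset.Icc 1 n \ S, z i)) :
    ∀ j ∈ Finset.Icc 1 n,
      0 ≤ ∑ S ∈ ((uplus (((Finset.Icc 1 n).erase j).powerset) A) \
                  ((Finset.Icc 1 n).erase j).powerset),
            ((∑ i ∈ S, z i) - ∑ i ∈ Finset.Icc 1 n \ S, z i) :=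
  stmt10_general n A hempty z hz h
end

section
/- Let A be a UC family of subsets of [n] with ∅ ∈ A, let c ∈ Z^n_{≥0} with ∑_i c_i ≥ 1, and suppose B ⊆ P([n]) is a UC family with B ⊎ A = B satisfying ∑_{S∈B}(∑_{i∈S} c_i − ∑_{i∉S} c_i) ≤ −1. Then the rational vector ȳ with ȳ_i = c_i / ∑_j c_j satisfies the strict inequality ∑_{i∈[n]} ȳ_i |B_i| < |B|/2. -/
open Finset

theorem stmt15 (n : ℕ) (A : Finset (Finset ℕ)) (hUC : UnionClosed A) (hempty : ∅ ∈ A)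
    (hA : ∀ S ∈ A, S ⊆ Finset.Icc 1 n)
    (c : ℕ → ℤ) (hc : ∀ i, 0 ≤ c i) (hsum : 1 ≤ ∑ i ∈ Finset.Icc 1 n, c i)
    (B : Finset (Finset ℕ)) (hBUC : UnionClosed B) (hBsub : ∀ S ∈ B, S ⊆ Finset.Icc 1 n)
    (hBA : uplus B A = B)
    (hviol : (∑ S ∈ B, ((∑ i ∈ S, c i) - ∑ i ∈ Finset.Icc 1 n \ S, c i)) ≤ -1) :
    ∑ i ∈ Finset.Icc 1 n,
        ((c i : ℚ) / (∑ j ∈ Finset.Icc 1 n, (c j : ℚ))) *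
          ((B.filter fun S => i ∈ S).card : ℚ)
      < (B.card : ℚ) / 2 := by
  set C : ℤ := ∑ i ∈ Finset.Icc 1 n, c i with hCdef
  -- rewrite the violated inequality
  have hsdiff : ∀ S ∈ B, ∑ i ∈ Finset.Icc 1 n \ S, c i = C - ∑ i ∈ S, c i := by
    intro S hS
    exact Finset.sum_sdiff_eq_sub (hBsub S hS)
  have hviol' : 2 * (∑ S ∈ B, ∑ i ∈ S, c i) - (B.card : ℤ) * C ≤ -1 := by
    have h2 : ∑ S ∈ B, ((∑ i ∈ S, c i) - ∑ i ∈ Finset.Icc 1 n \ S, c i)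
        = ∑ S ∈ B, (2 * (∑ i ∈ S, c i) - C) :=
      Finset.sum_congr rfl (fun S hS => by rw [hsdiff S hS]; ring)
    rw [h2, Finset.sum_sub_distrib, ← Finset.mul_sum, Finset.sum_const, nsmul_eq_mul] at hviol
    linarith
  -- swap the double sum
  have hswap : ∑ S ∈ B, ∑ i ∈ S, c i
      = ∑ i ∈ Finset.Icc 1 n, c i * ((B.filter fun S => i ∈ S).card : ℤ) := by
    have h1 : ∀ S ∈ B, ∑ i ∈ S, c i = ∑ i ∈ Finset.Icc 1 n, if i ∈ S then c i else 0 := by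
      intro S hS
      rw [← Finset.sum_filter]
      congr 1
      ext i
      simp only [Finset.mem_filter]
      exact ⟨fun h => ⟨hBsub S hS h, h⟩, fun h => h.2⟩
    rw [Finset.sum_congr rfl h1, Finset.sum_comm]
    refine Finset.sum_congr rfl fun i _ => ?_
    rw [← Finset.sum_filter, Finset.sum_const, nsmul_eq_mul]
    ring
  -- pass to rationals
  have hCq : (0:ℚ) < (C:ℚ) := by exact_mod_cast lt_of_lt_of_le zero_lt_one hsum
  have hden : (∑ j ∈ Finset.Icc 1 n, (c j : ℚ)) = (C:ℚ) := by
    rw [hCdef]; push_cast; rfl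
  have key : 2 * (∑ i ∈ Finset.Icc 1 n, c i * ((B.filter fun S => i ∈ S).card : ℤ))
      ≤ (B.card : ℤ) * C - 1 := by
    rw [← hswap]; linarith
  have keyq : 2 * (∑ i ∈ Finset.Icc 1 n, (c i : ℚ) * ((B.filter fun S => i ∈ S).card : ℚ))
      < (B.card : ℚ) * (C:ℚ) := by
    have : ((2 * (∑ i ∈ Finset.Icc 1 n, c i * ((B.filter fun S => i ∈ S).card : ℤ)) : ℤ) : ℚ)
        ≤ ((((B.card : ℤ) * C - 1) : ℤ) : ℚ) := by exact_mod_cast key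
    push_cast at this
    linarith
  have hLHS : ∑ i ∈ Finset.Icc 1 n,
        ((c i : ℚ) / (∑ j ∈ Finset.Icc 1 n, (c j : ℚ))) *
          ((B.filter fun S => i ∈ S).card : ℚ)
      = (∑ i ∈ Finset.Icc 1 n, (c i : ℚ) * ((B.filter fun S => i ∈ S).card : ℚ)) / (C:ℚ) := by
    rw [Finset.sum_div]
    refine Finset.sum_congr rfl fun i _ => ?_
    rw [hden, div_mul_eq_mul_div]
  rw [hLHS, div_lt_div_iff₀ hCq two_pos]
  linarith
end
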